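/- arXiv:1605.02323 — 2 statements merged into one kernel-verified Lean document; each statement's English description precedes it below -/
import Mathlib

section
/- For every integer n ≥ 1, the set PC*_n of all automorphisms α of the free group F_n for which there exist a permutation π of {1, …, n}, signs ε_1, …, ε_n ∈ {1, −1}, and words w_1, …, w_n ∈ F_n with α(x_i) = w_i⁻¹ x_{π(i)}^{ε_i} w_i for all i, is a subgroup of Aut(F_n), and this subgroup equals the subgroup of Aut(F_n) generated by {σ_1, …, σ_{n−1}, ρ_1, …, ρ_{n−1}, τ_1, …, τ_n}. -/
namespace LoopBraidGroups

/-- The `i`-th generator `x_i` of the free group of rank `n`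
(with junk value `1` when `i ≥ n`); indices are `0`-based. -/
def xg (n i : ℕ) : FreeGroup (Fin n) :=
  if h : i < n then FreeGroup.of (⟨i, h⟩ : Fin n) else 1

/-- `IsSigma n i s` : `s` is the automorphism `σ_i` of the free group of rank `n`,
sending `x_i ↦ x_{i+1}`, `x_{i+1} ↦ x_{i+1}⁻¹ x_i x_{i+1}` and fixing the
other generators. -/
def IsSigma (n i : ℕ) (s : MulAut (FreeGroup (Fin n))) : Prop :=
  s (xg n i) = xg n (i + 1) ∧
    s (xg n (i + 1)) = (xg n (i + 1))⁻¹ * xg n i * xg n (i + 1) ∧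
    ∀ j, j < n → j ≠ i → j ≠ i + 1 → s (xg n j) = xg n j

/-- `IsRho n i r` : `r` is the automorphism `ρ_i`, exchanging `x_i` and `x_{i+1}`
and fixing the other generators. -/
def IsRho (n i : ℕ) (r : MulAut (FreeGroup (Fin n))) : Prop :=
  r (xg n i) = xg n (i + 1) ∧ r (xg n (i + 1)) = xg n i ∧
    ∀ j, j < n → j ≠ i → j ≠ i + 1 → r (xg n j) = xg n j

/-- `IsTau n i t` : `t` is the automorphism `τ_i`, sending `x_i ↦ x_i⁻¹` and fixing
the other generators. -/
def IsTau (n i : ℕ) (t : MulAut (FreeGroup (Fin n))) : Prop :=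
  t (xg n i) = (xg n i)⁻¹ ∧ ∀ j, j < n → j ≠ i → t (xg n j) = xg n j

/-- The set `PC*_n` of automorphisms `α` of the free group of rank `n` such that
`α(x_i) = w_i⁻¹ x_{π(i)}^{ε_i} w_i` for some permutation `π`, signs `ε_i ∈ {1, -1}`
and words `w_i`. -/
def PCStarSet (n : ℕ) : Set (MulAut (FreeGroup (Fin n))) :=
  {α | ∃ (π : Equiv.Perm (Fin n)) (ε : Fin n → ℤ) (w : Fin n → FreeGroup (Fin n)),
      (∀ i, ε i = 1 ∨ ε i = -1) ∧
      ∀ i : Fin n, α (FreeGroup.of i) = (w i)⁻¹ * FreeGroup.of (π i) ^ ε i * w i}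

/-!
Write `f ∈ PC*` as `f (x_i) = (W i)⁻¹ x_{π i}^{±1} (W i)` with `W i` reduced and not starting
with a power of `x_{π i}`, and induct on `∑ |W i|`. If some `W m` has the form
`q x_{π j}^{±1} W j`, precomposing `f` with a suitable partial conjugation `x_m ↦ y⁻¹ x_m y`,
`y = x_j^{±1}`, replaces `W m` by the shorter `q W j`. Otherwise the graph obtained by wedging
the lollipops `W i⁻¹ x_{π i} W i` at their common root is folded, so every element of the
subgroup generated by the `f (x_i)` is read along a closed path at the root. Since `f` is onto,
this applies to each `x_a`, which forces a loop at the root: all `W i` are empty and `f` is a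
signed permutation. Signed permutations are products of the `ρ_i` and `τ_i`, and partial
conjugations are conjugates of `σ_1 ρ_1` or its inverse by permutations.
-/

open FreeGroup Equiv

variable {α ι : Type*}

lemma mulAut_ext {f g : MulAut (FreeGroup α)} (h : ∀ a, f (of a) = g (of a)) : f = g :=
  MulEquiv.toMonoidHom_injective (ext_hom _ _ h)

lemma mk_singleton_true (a : α) : mk [(a, true)] = of a := rfl

lemma mk_singleton_not (a : α) (b : Bool) : mk [(a, !b)] = (mk [(a, b)])⁻¹ := by
  simp [inv_mk, invRev]

lemma mk_singleton_false (a : α) : mk [(a, false)] = (of a)⁻¹ :=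
  mk_singleton_not a true

lemma commute_mk_singleton (a : α) (b b' : Bool) : Commute (mk [(a, b)]) (mk [(a, b')]) := by
  cases b <;> cases b' <;> simp [mk_singleton_true, mk_singleton_false]

lemma apply_mk_singleton_eq_self {f : MulAut (FreeGroup α)} {k : α} (h : f (of k) = of k)
    (e : Bool) : f (mk [(k, e)]) = mk [(k, e)] := by
  cases e <;> simp [mk_singleton_true, mk_singleton_false, h]

lemma _root_.IsConj.zpow {G : Type*} [Group G] {a b : G} (k : ℤ) (h : IsConj a b) :
    IsConj (a ^ k) (b ^ k) :=
  let ⟨c, hc⟩ := h; ⟨c, hc.zpow_right k⟩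

def permAut : Perm α →* MulAut (FreeGroup α) where
  toFun π := freeGroupCongr π
  map_one' := freeGroupCongr_refl
  map_mul' π π' := (freeGroupCongr_trans π' π).symm

lemma permAut_apply_mk (π : Perm α) (L : List (α × Bool)) :
    permAut π (mk L) = mk (L.map fun a => (π a.1, a.2)) :=
  map.mk

@[simp] lemma permAut_apply_of (π : Perm α) (a : α) : permAut π (of a) = of (π a) :=
  map.of

def IsPartialConj (m : α) (y : FreeGroup α) (A : MulAut (FreeGroup α)) : Prop :=
  A (of m) = y⁻¹ * of m * y ∧ ∀ k ≠ m, A (of k) = of k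

def PCStar (α : Type*) : Subgroup (MulAut (FreeGroup α)) where
  carrier := {f | ∃ (π : Perm α) (ε : α → ℤˣ), ∀ i, IsConj (of (π i) ^ (ε i : ℤ)) (f (of i))}
  one_mem' := ⟨1, 1, fun i => by simpa using IsConj.refl (of i)⟩
  mul_mem' := by
    rintro f g ⟨π, ε, hf⟩ ⟨π', ε', hg⟩
    refine ⟨π * π', fun i => ε (π' i) * ε' i, fun i => ?_⟩
    rw [Units.val_mul, zpow_mul, MulAut.mul_apply]
    have h := f.toMonoidHom.map_isConj (hg i)
    simp only [MulEquiv.coe_toMonoidHom, map_zpow] at h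
    exact ((hf (π' i)).zpow (ε' i)).trans h
  inv_mem' := by
    rintro f ⟨π, ε, hf⟩
    refine ⟨π⁻¹, fun k => ε (π⁻¹ k), fun k => ?_⟩
    have h := (f⁻¹).toMonoidHom.map_isConj (hf (π⁻¹ k))
    simp only [Perm.coe_inv, apply_symm_apply, MulEquiv.coe_toMonoidHom, map_zpow,
      MulAut.inv_apply_self] at h
    simpa [← zpow_mul, Int.units_mul_self] using (h.zpow (ε (π⁻¹ k))).symm

lemma coe_pcStar (n : ℕ) :
    (PCStar (Fin n) : Set (MulAut (FreeGroup (Fin n)))) = PCStarSet n := by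
  ext f
  constructor
  · rintro ⟨π, ε, hf⟩
    choose c hc using fun i => isConj_iff.1 (hf i)
    refine ⟨π, fun i => ε i, fun i => (c i)⁻¹, fun i => ?_, fun i => by simp [← hc i]⟩
    rcases Int.units_eq_one_or (ε i) with h | h <;> simp [h]
  · rintro ⟨π, ε, w, hε, hw⟩
    refine ⟨π, fun i => (Int.isUnit_iff.2 (hε i)).unit, fun i => ?_⟩
    exact isConj_iff.2 ⟨(w i)⁻¹, by simp [hw]⟩

lemma mem_pcStar_of_apply_of_eq {f : MulAut (FreeGroup α)} (π : Perm α) (b : α → Bool)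
    (h : ∀ k, f (of k) = mk [(π k, b k)]) : f ∈ PCStar α := by
  refine ⟨π, fun k => if b k then 1 else -1, fun k => ?_⟩
  rw [h]
  cases hb : b k <;> simp [hb, mk_singleton_true, mk_singleton_false, -isConj_iff, IsConj.refl]

lemma permAut_mem_pcStar (π : Perm α) : permAut π ∈ PCStar α :=
  ⟨π, 1, fun i => by simpa using IsConj.refl (of (π i))⟩

lemma IsPartialConj.mem_pcStar {m : α} {y : FreeGroup α} {A : MulAut (FreeGroup α)}
    (h : IsPartialConj m y A) : A ∈ PCStar α := by
  refine ⟨1, 1, fun k => ?_⟩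
  rcases eq_or_ne k m with rfl | hk
  · exact isConj_iff.2 ⟨y⁻¹, by simp [h.1]⟩
  · simpa [h.2 k hk] using IsConj.refl (of k)

def lollipop (W : List (α × Bool)) (ℓ : α × Bool) : List (α × Bool) := invRev W ++ ℓ :: W

lemma mk_lollipop (W : List (α × Bool)) (ℓ : α × Bool) :
    mk (lollipop W ℓ) = (mk W)⁻¹ * mk [ℓ] * mk W := by
  rw [lollipop, inv_mk, mul_mk, mul_mk, List.append_assoc, List.singleton_append]

section LollipopGraph

variable (W : ι → List (α × Bool)) (c : ι → α)

/-- An edge of the graph obtained by wedging the lollipops `lollipop (W i) (c i, _)` at their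
common root `[]`: its vertices are the suffixes of the `W i`, and the loop at `W i` carries the
letter `c i`. -/
def LollipopStep (t : List (α × Bool)) (a : α × Bool) (s : List (α × Bool)) : Prop :=
  (∃ i, t <:+ W i) ∧ (∃ i, s <:+ W i) ∧
    (t = a :: s ∨ s = (a.1, !a.2) :: t ∨ s = t ∧ ∃ i, W i = t ∧ a.1 = c i)

def LollipopPath : List (α × Bool) → List (α × Bool) → List (α × Bool) → Prop
  | [], p, q => p = q
  | a :: l, p, q => ∃ r, LollipopStep W c p a r ∧ LollipopPath l r q

/-- The lollipop graph is folded: no vertex has two outgoing edges with the same label. -/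
structure IsFolded : Prop where
  reduced : ∀ i, IsReduced (W i)
  head_ne : ∀ i, ∀ a ∈ (W i).head?, a.1 ≠ c i
  not_suffix : ∀ i j b, ¬ (c j, b) :: W j <:+ W i

variable {W c}

lemma LollipopStep.symm {t s : List (α × Bool)} {a : α × Bool} (h : LollipopStep W c t a s) :
    LollipopStep W c s (a.1, !a.2) t := by
  obtain ⟨ht, hs, h | h | ⟨rfl, i, hi, ha⟩⟩ := h
  · exact ⟨hs, ht, Or.inr (Or.inl (by simpa using h))⟩
  · exact ⟨hs, ht, Or.inl h⟩
  · exact ⟨ht, ht, Or.inr (Or.inr ⟨rfl, i, hi, ha⟩)⟩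

lemma lollipopPath_append {l₁ l₂ p q : List (α × Bool)} :
    LollipopPath W c (l₁ ++ l₂) p q ↔
      ∃ r, LollipopPath W c l₁ p r ∧ LollipopPath W c l₂ r q := by
  induction l₁ generalizing p with
  | nil => simp [LollipopPath]
  | cons a l ih =>
    simp only [List.cons_append, LollipopPath, ih]
    grind

lemma LollipopPath.invRev {l p q : List (α × Bool)} (h : LollipopPath W c l p q) :
    LollipopPath W c (invRev l) q p := by
  induction l generalizing p with
  | nil => exact h.symm
  | cons a l ih =>
    obtain ⟨r, hs, hr⟩ := h
    rw [invRev_cons]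
    exact lollipopPath_append.2 ⟨r, ih hr, p, hs.symm, rfl⟩

lemma IsFolded.step_unique (hW : IsFolded W c) {t s s' : List (α × Bool)} {a : α × Bool}
    (h : LollipopStep W c t a s) (h' : LollipopStep W c t a s') : s = s' := by
  have down_up : ∀ u u', t = a :: u → u' = (a.1, !a.2) :: t → (∃ i, u' <:+ W i) → False := by
    rintro u u' rfl rfl ⟨i, hi⟩
    simpa using (isReduced_cons_cons.1 ((hW.reduced i).infix hi.isInfix)).1 rfl
  have down_loop : ∀ u, t = a :: u → (∃ i, W i = t ∧ a.1 = c i) → False := by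
    rintro u rfl ⟨i, hi, ha⟩
    exact hW.head_ne i a (by simp [hi]) ha
  have up_loop : ∀ u', u' = (a.1, !a.2) :: t → (∃ i, u' <:+ W i) →
      (∃ i, W i = t ∧ a.1 = c i) → False := by
    rintro u' rfl ⟨m, hm⟩ ⟨i, rfl, ha⟩
    exact hW.not_suffix m i (!a.2) (ha ▸ hm)
  obtain ⟨-, hs, h⟩ := h
  obtain ⟨-, hs', h'⟩ := h'
  rcases h with h | h | ⟨rfl, hl⟩ <;> rcases h' with h' | h' | ⟨rfl, hl'⟩
  · exact List.cons_injective (h.symm.trans h')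
  · exact (down_up s s' h h' hs').elim
  · exact (down_loop s h hl').elim
  · exact (down_up s' s h' h hs).elim
  · exact h.trans h'.symm
  · exact (up_loop s h hs hl').elim
  · exact (down_loop s' h' hl).elim
  · exact (up_loop s' h' hs' hl).elim
  · rfl

lemma IsFolded.lollipopPath_of_red (hW : IsFolded W c) {l₁ l₂ p q : List (α × Bool)}
    (h : Red l₁ l₂) (hl : LollipopPath W c l₁ p q) : LollipopPath W c l₂ p q := by
  induction h with
  | refl => exact hl
  | tail _ hstep ih =>
    obtain @⟨A, B, x, b⟩ := hstep
    obtain ⟨r, hA, r₁, hs₁, r₂, hs₂, hB⟩ := lollipopPath_append.1 ih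
    have : r₂ = r := hW.step_unique hs₂ hs₁.symm
    exact lollipopPath_append.2 ⟨r, hA, this ▸ hB⟩

lemma lollipopPath_invRev_of_suffix {i : ι} {s : List (α × Bool)} (h : s <:+ W i) :
    LollipopPath W c (invRev s) [] s := by
  induction s with
  | nil => rfl
  | cons a s ih =>
    have hs : s <:+ W i := (List.suffix_cons a s).trans h
    rw [invRev_cons]
    exact lollipopPath_append.2 ⟨s, ih hs, a :: s, ⟨⟨i, hs⟩, ⟨i, h⟩, by simp⟩, rfl⟩

lemma lollipopPath_lollipop (i : ι) (b : Bool) :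
    LollipopPath W c (lollipop (W i) (c i, b)) [] [] := by
  have hup := lollipopPath_invRev_of_suffix (c := c) (List.suffix_refl (W i))
  have hdown := hup.invRev
  rw [invRev_invRev] at hdown
  have hW : ∃ j, W i <:+ W j := ⟨i, List.suffix_refl _⟩
  exact lollipopPath_append.2
    ⟨W i, hup, W i, ⟨hW, hW, Or.inr (Or.inr ⟨rfl, i, rfl, rfl⟩)⟩, hdown⟩

lemma IsFolded.lollipopPath_toWord [DecidableEq α] (hW : IsFolded W c) (b : ι → Bool)
    {x : FreeGroup α}
    (hx : x ∈ Subgroup.closure (Set.range fun i => FreeGroup.mk (lollipop (W i) (c i, b i)))) :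
    LollipopPath W c x.toWord [] [] := by
  induction hx using Subgroup.closure_induction with
  | mem x hx =>
    obtain ⟨i, rfl⟩ := hx
    exact hW.lollipopPath_of_red (toWord_mk (L₁ := lollipop (W i) (c i, b i)) ▸ reduce.red)
      (lollipopPath_lollipop i (b i))
  | one => rfl
  | mul x y _ _ hx hy =>
    exact hW.lollipopPath_of_red (toWord_mul x y ▸ reduce.red)
      (lollipopPath_append.2 ⟨[], hx, hy⟩)
  | inv x _ hx => simpa using hx.invRev

/-- In a folded graph the only closed path at the root reading a single letter is a loop. -/
lemma IsFolded.exists_eq_nil_of_of_mem_closure [DecidableEq α] (hW : IsFolded W c)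
    (b : ι → Bool) {a : α}
    (ha : of a ∈ Subgroup.closure (Set.range fun i => FreeGroup.mk (lollipop (W i) (c i, b i)))) :
    ∃ i, W i = [] ∧ c i = a := by
  obtain ⟨r, ⟨-, -, h⟩, rfl⟩ := hW.lollipopPath_toWord b ha
  rcases h with h | h | ⟨-, i, hi, hc⟩
  · simp at h
  · simp at h
  · exact ⟨i, hi, hc.symm⟩

end LollipopGraph

lemma exists_mk_singleton_eq_zpow (a : α) (u : ℤˣ) : ∃ b, mk [(a, b)] = of a ^ (u : ℤ) := by
  rcases Int.units_eq_one_or u with rfl | rfl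
  · exact ⟨true, by simp [mk_singleton_true]⟩
  · exact ⟨false, by simp [mk_singleton_false]⟩

/-- Stripping the letters `x_{ℓ.1}^{±1}` from the front of `L` does not change the conjugate. -/
lemma exists_lollipop_eq (ℓ : α × Bool) {L : List (α × Bool)} (hL : IsReduced L) :
    ∃ W, IsReduced W ∧ (∀ a ∈ W.head?, a.1 ≠ ℓ.1) ∧ W.length ≤ L.length ∧
      mk (lollipop W ℓ) = mk (lollipop L ℓ) := by
  induction L with
  | nil => exact ⟨[], .nil, by simp, le_rfl, rfl⟩
  | cons a L ih =>
    by_cases ha : a.1 = ℓ.1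
    · obtain ⟨W, hW, hhead, hlen, heq⟩ := ih (hL.infix (List.suffix_cons a L).isInfix)
      refine ⟨W, hW, hhead, by simp; omega, heq.trans ?_⟩
      obtain ⟨x, e⟩ := a
      obtain ⟨y, e'⟩ := ℓ
      obtain rfl : x = y := ha
      have hc : (mk [(x, e)])⁻¹ * mk [(x, e')] * mk [(x, e)] = mk [(x, e')] := by
        rw [mul_assoc, ← (commute_mk_singleton x e e').eq, inv_mul_cancel_left]
      rw [mk_lollipop, mk_lollipop, ← List.singleton_append (l := L), ← mul_mk]
      conv_lhs => rw [← hc]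
      group
    · exact ⟨a :: L, hL, by simpa using ha, le_rfl, rfl⟩

lemma exists_lollipop_eq_conj [DecidableEq α] (ℓ : α × Bool) (v : FreeGroup α) :
    ∃ W, IsReduced W ∧ (∀ a ∈ W.head?, a.1 ≠ ℓ.1) ∧ W.length ≤ v.norm ∧
      mk (lollipop W ℓ) = v⁻¹ * mk [ℓ] * v := by
  obtain ⟨W, hW, hhead, hlen, heq⟩ := exists_lollipop_eq ℓ (isReduced_toWord (x := v))
  exact ⟨W, hW, hhead, hlen, by rw [heq, mk_lollipop, mk_toWord]⟩

lemma closure_range_mulAut_apply_of (f : MulAut (FreeGroup α)) :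
    Subgroup.closure (Set.range fun i => f (of i)) = ⊤ := by
  have h := MonoidHom.map_closure f.toMonoidHom (Set.range of)
  rw [closure_range_of, ← Set.range_comp] at h
  rw [← top_le_iff]
  intro x _
  rw [← f.apply_symm_apply x]
  exact h ▸ Subgroup.mem_map_of_mem _ (Subgroup.mem_top _)

section LollipopForm

structure LollipopForm (f : MulAut (FreeGroup α)) (π : Perm α) (b : α → Bool)
    (W : α → List (α × Bool)) : Prop where
  reduced : ∀ i, IsReduced (W i)
  head_ne : ∀ i, ∀ a ∈ (W i).head?, a.1 ≠ π i
  apply_of : ∀ i, f (of i) = mk (lollipop (W i) (π i, b i))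

variable {f : MulAut (FreeGroup α)} {π : Perm α} {b : α → Bool} {W : α → List (α × Bool)}

lemma exists_lollipopForm [DecidableEq α] (hf : f ∈ PCStar α) :
    ∃ π b W, LollipopForm f π b W := by
  obtain ⟨π, ε, hf⟩ := hf
  have h : ∀ i, ∃ e W, IsReduced W ∧ (∀ a ∈ W.head?, a.1 ≠ π i) ∧
      f (of i) = mk (lollipop W (π i, e)) := by
    intro i
    obtain ⟨v, hv⟩ := isConj_iff.1 (hf i)
    obtain ⟨e, he⟩ := exists_mk_singleton_eq_zpow (π i) (ε i)
    obtain ⟨W, hW, hhead, -, heq⟩ := exists_lollipop_eq_conj (π i, e) v⁻¹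
    exact ⟨e, W, hW, hhead, by rw [heq, inv_inv, he, hv]⟩
  choose b W hW hhead happly using h
  exact ⟨π, b, W, hW, hhead, happly⟩

lemma LollipopForm.eq_nil [DecidableEq α] (hf : LollipopForm f π b W)
    (hfold : ∀ m j e, ¬ (π j, e) :: W j <:+ W m) (i : α) : W i = [] := by
  have hF : IsFolded W π := ⟨hf.reduced, hf.head_ne, hfold⟩
  have hgen := closure_range_mulAut_apply_of f
  simp only [hf.apply_of] at hgen
  obtain ⟨k, hk, hπk⟩ :=
    hF.exists_eq_nil_of_of_mem_closure b (a := π i) (hgen ▸ Subgroup.mem_top _)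
  rwa [π.injective hπk] at hk

lemma LollipopForm.exists_shorter_of_agree [Fintype α] [DecidableEq α]
    (hf : LollipopForm f π b W) {g : MulAut (FreeGroup α)} {m : α} {v : FreeGroup α}
    (hfix : ∀ k ≠ m, g (of k) = f (of k)) (hm : g (of m) = v⁻¹ * FreeGroup.mk [(π m, b m)] * v)
    (hv : v.norm < (W m).length) :
    ∃ W', LollipopForm g π b W' ∧ ∑ i, (W' i).length < ∑ i, (W i).length := by
  obtain ⟨Wm, hred, hhead, hlen, heq⟩ := exists_lollipop_eq_conj (π m, b m) v
  refine ⟨Function.update W m Wm, ⟨fun i => ?_, fun i => ?_, fun i => ?_⟩, ?_⟩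
  · rcases eq_or_ne i m with rfl | hi <;> simp [*, hf.reduced]
  · rcases eq_or_ne i m with rfl | hi
    · simpa using hhead
    · simpa [hi] using hf.head_ne i
  · rcases eq_or_ne i m with rfl | hi <;> simp [*, hf.apply_of]
  · refine Finset.sum_lt_sum (fun i _ => ?_) ⟨m, Finset.mem_univ m, by simp; omega⟩
    rcases eq_or_ne i m with rfl | hi <;> simp [*]; omega

lemma LollipopForm.exists_apply_mk_singleton_eq (hf : LollipopForm f π b W) (j : α) (e : Bool) :
    ∃ e', f (FreeGroup.mk [(j, e')]) =
      (FreeGroup.mk (W j))⁻¹ * FreeGroup.mk [(π j, e)] * FreeGroup.mk (W j) := by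
  by_cases h : b j = e
  · exact ⟨true, by rw [mk_singleton_true, hf.apply_of, mk_lollipop, h]⟩
  · have he : e = !b j := by cases e <;> simp_all
    refine ⟨false, ?_⟩
    rw [mk_singleton_false, _root_.map_inv, hf.apply_of, mk_lollipop, he, mk_singleton_not]
    group

lemma LollipopForm.exists_shorter [Fintype α] [DecidableEq α]
    {G : Subgroup (MulAut (FreeGroup α))}
    (hconj : ∀ m j, m ≠ j → ∀ e, ∃ A ∈ G, IsPartialConj m (FreeGroup.mk [(j, e)]) A)
    (hf : LollipopForm f π b W) {m j : α} {e : Bool} (hsuf : (π j, e) :: W j <:+ W m) :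
    ∃ A ∈ G, ∃ W', LollipopForm (f * A) π b W' ∧
      ∑ i, (W' i).length < ∑ i, (W i).length := by
  obtain ⟨q, hq⟩ := hsuf
  have hmj : m ≠ j := by
    rintro rfl
    have := congrArg List.length hq
    simp at this
    omega
  obtain ⟨e', he'⟩ := hf.exists_apply_mk_singleton_eq j (!e)
  obtain ⟨A, hA, hAm, hAfix⟩ := hconj m j hmj e'
  refine ⟨A, hA, hf.exists_shorter_of_agree (v := FreeGroup.mk q * FreeGroup.mk (W j))
    (fun k hk => by rw [MulAut.mul_apply, hAfix k hk]) ?_ ?_⟩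
  · have hWm : FreeGroup.mk (W m) =
        FreeGroup.mk q * FreeGroup.mk [(π j, e)] * FreeGroup.mk (W j) := by
      rw [← hq, mul_assoc, mul_mk, mul_mk]
      rfl
    rw [MulAut.mul_apply, hAm, _root_.map_mul, _root_.map_mul, _root_.map_inv, he', hf.apply_of,
      mk_lollipop, hWm, mk_singleton_not]
    group
  · calc (FreeGroup.mk q * FreeGroup.mk (W j)).norm ≤ q.length + (W j).length :=
          (FreeGroup.norm_mul_le _ _).trans (add_le_add norm_mk_le norm_mk_le)
      _ < (W m).length := by rw [← hq]; simp

end LollipopForm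

theorem pcStar_le [Fintype α] [DecidableEq α] {G : Subgroup (MulAut (FreeGroup α))}
    (hsigned : ∀ (π : Perm α) (b : α → Bool), ∃ f ∈ G, ∀ i, f (of i) = mk [(π i, b i)])
    (hconj : ∀ m j, m ≠ j → ∀ e, ∃ A ∈ G, IsPartialConj m (mk [(j, e)]) A) :
    PCStar α ≤ G := by
  intro f hf
  obtain ⟨π, b, W, hW⟩ := exists_lollipopForm hf
  clear hf
  induction hN : ∑ i, (W i).length using Nat.strong_induction_on generalizing f W with
  | _ N ih =>
  by_cases hfold : ∃ m j e, (π j, e) :: W j <:+ W m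
  · obtain ⟨m, j, e, hsuf⟩ := hfold
    obtain ⟨A, hA, W', hW', hlt⟩ := hW.exists_shorter hconj hsuf
    simpa using G.mul_mem (ih _ (hN ▸ hlt) W' hW' rfl) (G.inv_mem hA)
  · push Not at hfold
    obtain ⟨g, hg, hgf⟩ := hsigned π b
    convert hg
    exact mulAut_ext fun i => by rw [hgf, hW.apply_of, hW.eq_nil hfold]; rfl

lemma IsPartialConj.conj_permAut {m : α} {y : FreeGroup α} {A : MulAut (FreeGroup α)}
    (h : IsPartialConj m y A) (π : Perm α) :
    IsPartialConj (π m) (permAut π y) (permAut π * A * (permAut π)⁻¹) := by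
  have hinv : ∀ k, (permAut π)⁻¹ (of k) = of (π⁻¹ k) := fun k => by
    rw [← _root_.map_inv, permAut_apply_of]
  refine ⟨?_, fun k hk => ?_⟩
  · simp [MulAut.mul_apply, hinv, h.1]
  · have : π⁻¹ k ≠ m := fun h' => hk (by rw [← h']; simp)
    rw [MulAut.mul_apply, MulAut.mul_apply, hinv, h.2 _ this, permAut_apply_of]
    simp

lemma IsPartialConj.inv {m : α} {y : FreeGroup α} {A : MulAut (FreeGroup α)}
    (h : IsPartialConj m y A) (hy : A y = y) : IsPartialConj m y⁻¹ A⁻¹ := by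
  refine ⟨A.symm_apply_eq.2 ?_, fun k hk => A.symm_apply_eq.2 (h.2 k hk).symm⟩
  simp [h.1, hy, mul_assoc]

lemma exists_perm_apply_eq_apply_eq [DecidableEq α] {a c m j : α} (hac : a ≠ c)
    (hmj : m ≠ j) : ∃ π : Perm α, π a = m ∧ π c = j := by
  refine ⟨swap a m * swap c (swap a m j), ?_, by simp⟩
  rw [Perm.mul_apply, swap_apply_of_ne_of_ne hac, swap_apply_left]
  rintro h
  exact hmj (by simpa [eq_comm] using congrArg (swap a m) h)

lemma exists_isPartialConj_mem [DecidableEq α] {G : Subgroup (MulAut (FreeGroup α))}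
    (hperm : ∀ π, permAut π ∈ G) {a c : α} (hac : a ≠ c) {A₀ : MulAut (FreeGroup α)}
    (hA₀ : A₀ ∈ G) (h : IsPartialConj a (of c) A₀) {m j : α} (hmj : m ≠ j) (e : Bool) :
    ∃ A ∈ G, IsPartialConj m (mk [(j, e)]) A := by
  obtain ⟨π, rfl, rfl⟩ := exists_perm_apply_eq_apply_eq hac hmj
  have hA := h.conj_permAut π
  rw [permAut_apply_of] at hA
  have hmem := G.mul_mem (G.mul_mem (hperm π) hA₀) (G.inv_mem (hperm π))
  cases e
  · rw [mk_singleton_false]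
    exact ⟨_, G.inv_mem hmem, hA.inv (hA.2 _ (π.injective.ne hac.symm))⟩
  · exact ⟨_, hmem, hA⟩

lemma exists_signChange_mem [Fintype α] [DecidableEq α] {G : Subgroup (MulAut (FreeGroup α))}
    (hτ : ∀ a, ∃ t ∈ G, ∀ k, t (of k) = mk [(k, decide (k ≠ a))]) (b : α → Bool) :
    ∃ t ∈ G, ∀ k, t (of k) = mk [(k, b k)] := by
  suffices h : ∀ s : Finset α, ∃ t ∈ G, ∀ k, t (of k) = mk [(k, decide (k ∉ s))] by
    simpa using h (Finset.univ.filter fun k => b k = false)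
  intro s
  induction s using Finset.induction_on with
  | empty => exact ⟨1, G.one_mem, fun k => by simp [mk_singleton_true]⟩
  | insert a s ha ih =>
    obtain ⟨t, ht, htk⟩ := ih
    obtain ⟨τa, hτa, hτak⟩ := hτ a
    refine ⟨τa * t, G.mul_mem hτa ht, fun k => ?_⟩
    rw [MulAut.mul_apply, htk]
    rcases eq_or_ne k a with rfl | hk
    · simpa [ha, mk_singleton_true] using hτak k
    · have hτk : τa (of k) = of k := by simpa [hk, mk_singleton_true] using hτak k
      simpa [hk] using apply_mk_singleton_eq_self hτk _

section SigmaRhoTau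

variable {n i : ℕ} {σ ρ τ : ℕ → MulAut (FreeGroup (Fin n))}

lemma xg_of_lt (h : i < n) : xg n i = of ⟨i, h⟩ := dif_pos h

lemma IsRho.eq_permAut {r : MulAut (FreeGroup (Fin n))} (h : IsRho n i r) (hi : i + 1 < n) :
    r = permAut (swap ⟨i, by omega⟩ ⟨i + 1, hi⟩) := by
  obtain ⟨h₁, h₂, hfix⟩ := h
  simp only [xg_of_lt (show i < n by omega), xg_of_lt hi] at h₁ h₂
  refine mulAut_ext fun k => ?_
  rw [permAut_apply_of]
  by_cases hk : k.val = i
  · obtain rfl : k = ⟨i, Nat.lt_of_succ_lt hi⟩ := Fin.ext hk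
    simpa using h₁
  by_cases hk' : k.val = i + 1
  · obtain rfl : k = ⟨i + 1, hi⟩ := Fin.ext hk'
    simpa using h₂
  rw [swap_apply_of_ne_of_ne (Fin.ne_of_val_ne hk) (Fin.ne_of_val_ne hk')]
  simpa [xg_of_lt k.isLt] using hfix k k.isLt hk hk'

lemma IsTau.apply_of {t : MulAut (FreeGroup (Fin n))} (h : IsTau n i t) (hi : i < n)
    (k : Fin n) : t (of k) = mk [(k, decide (k ≠ ⟨i, hi⟩))] := by
  obtain ⟨h₁, hfix⟩ := h
  rw [xg_of_lt hi] at h₁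
  by_cases hk : k = ⟨i, hi⟩
  · simpa [hk, mk_singleton_false] using h₁
  · simpa [hk, mk_singleton_true, xg_of_lt k.isLt] using hfix k k.isLt (fun h => hk (Fin.ext h))

lemma IsSigma.isPartialConj_mul {s r : MulAut (FreeGroup (Fin n))} (hs : IsSigma n i s)
    (hr : IsRho n i r) (hi : i + 1 < n) :
    IsPartialConj ⟨i, by omega⟩ (of ⟨i + 1, hi⟩) (s * r) := by
  obtain ⟨hs₁, hs₂, hsfix⟩ := hs
  obtain ⟨hr₁, hr₂, hrfix⟩ := hr
  simp only [xg_of_lt (show i < n by omega), xg_of_lt hi] at hs₁ hs₂ hr₁ hr₂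
  refine ⟨by rw [MulAut.mul_apply, hr₁, hs₂], fun k hk => ?_⟩
  rw [MulAut.mul_apply]
  by_cases hk' : k.val = i + 1
  · obtain rfl : k = ⟨i + 1, hi⟩ := Fin.ext hk'
    rw [hr₂, hs₁]
  have hk'' : k.val ≠ i := fun h => hk (Fin.ext h)
  have hr : r (of k) = of k := by simpa [xg_of_lt k.isLt] using hrfix k k.isLt hk'' hk'
  simpa [xg_of_lt k.isLt, hr] using hsfix k k.isLt hk'' hk'

lemma permAut_mem_of_swap_mem {G : Subgroup (MulAut (FreeGroup (Fin n)))}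
    (h : ∀ i (hi : i + 1 < n), permAut (swap ⟨i, by omega⟩ ⟨i + 1, hi⟩) ∈ G)
    (π : Perm (Fin n)) : permAut π ∈ G := by
  cases n with
  | zero => simp [Subsingleton.elim π 1, G.one_mem]
  | succ n =>
    have hle : (⊤ : Subgroup (Perm (Fin (n + 1)))) ≤ G.comap permAut := by
      rw [← Subgroup.closure_eq_top_of_mclosure_eq_top (Perm.mclosure_swap_castSucc_succ n),
        Subgroup.closure_le]
      rintro _ ⟨i, rfl⟩
      exact h i (by omega)
    exact hle (Subgroup.mem_top π)

def sigmaRhoTau (n : ℕ) (σ ρ τ : ℕ → MulAut (FreeGroup (Fin n))) :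
    Set (MulAut (FreeGroup (Fin n))) :=
  {g | ∃ i, i + 1 < n ∧ g = σ i} ∪ {g | ∃ i, i + 1 < n ∧ g = ρ i} ∪ {g | ∃ i, i < n ∧ g = τ i}

lemma sigma_mem_closure_sigmaRhoTau (hi : i + 1 < n) :
    σ i ∈ Subgroup.closure (sigmaRhoTau n σ ρ τ) :=
  Subgroup.subset_closure (Or.inl (Or.inl ⟨i, hi, rfl⟩))

lemma rho_mem_closure_sigmaRhoTau (hi : i + 1 < n) :
    ρ i ∈ Subgroup.closure (sigmaRhoTau n σ ρ τ) :=
  Subgroup.subset_closure (Or.inl (Or.inr ⟨i, hi, rfl⟩))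

lemma tau_mem_closure_sigmaRhoTau (hi : i < n) :
    τ i ∈ Subgroup.closure (sigmaRhoTau n σ ρ τ) :=
  Subgroup.subset_closure (Or.inr ⟨i, hi, rfl⟩)

lemma closure_sigmaRhoTau_le_pcStar (hσ : ∀ i, i + 1 < n → IsSigma n i (σ i))
    (hρ : ∀ i, i + 1 < n → IsRho n i (ρ i)) (hτ : ∀ i, i < n → IsTau n i (τ i)) :
    Subgroup.closure (sigmaRhoTau n σ ρ τ) ≤ PCStar (Fin n) := by
  have hρ' : ∀ i (hi : i + 1 < n), ρ i ∈ PCStar (Fin n) := fun i hi =>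
    (hρ i hi).eq_permAut hi ▸ permAut_mem_pcStar _
  rw [Subgroup.closure_le]
  rintro g ((⟨i, hi, rfl⟩ | ⟨i, hi, rfl⟩) | ⟨i, hi, rfl⟩)
  · simpa using (PCStar _).mul_mem ((hσ i hi).isPartialConj_mul (hρ i hi) hi).mem_pcStar
      ((PCStar _).inv_mem (hρ' i hi))
  · exact hρ' i hi
  · exact mem_pcStar_of_apply_of_eq 1 _ ((hτ i hi).apply_of hi)

lemma permAut_mem_closure_sigmaRhoTau (hρ : ∀ i, i + 1 < n → IsRho n i (ρ i))
    (π : Perm (Fin n)) : permAut π ∈ Subgroup.closure (sigmaRhoTau n σ ρ τ) :=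
  permAut_mem_of_swap_mem (fun i hi => (hρ i hi).eq_permAut hi ▸ rho_mem_closure_sigmaRhoTau hi) π

lemma exists_mem_closure_sigmaRhoTau_apply_of_eq (hρ : ∀ i, i + 1 < n → IsRho n i (ρ i))
    (hτ : ∀ i, i < n → IsTau n i (τ i)) (π : Perm (Fin n)) (b : Fin n → Bool) :
    ∃ f ∈ Subgroup.closure (sigmaRhoTau n σ ρ τ), ∀ i, f (of i) = mk [(π i, b i)] := by
  obtain ⟨t, ht, htb⟩ := exists_signChange_mem
    (fun a => ⟨τ a, tau_mem_closure_sigmaRhoTau a.isLt, (hτ a a.isLt).apply_of a.isLt⟩) b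
  refine ⟨permAut π * t, mul_mem (permAut_mem_closure_sigmaRhoTau hρ π) ht, fun i => ?_⟩
  rw [MulAut.mul_apply, htb, permAut_apply_mk]
  rfl

lemma exists_isPartialConj_mem_closure_sigmaRhoTau (hσ : ∀ i, i + 1 < n → IsSigma n i (σ i))
    (hρ : ∀ i, i + 1 < n → IsRho n i (ρ i)) {m j : Fin n} (hmj : m ≠ j) (e : Bool) :
    ∃ A ∈ Subgroup.closure (sigmaRhoTau n σ ρ τ), IsPartialConj m (mk [(j, e)]) A := by
  have h2 : 0 + 1 < n := by omega
  exact exists_isPartialConj_mem (permAut_mem_closure_sigmaRhoTau hρ) (by simp [Fin.ext_iff])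
    (mul_mem (sigma_mem_closure_sigmaRhoTau h2) (rho_mem_closure_sigmaRhoTau h2))
    ((hσ 0 h2).isPartialConj_mul (hρ 0 h2) h2) hmj e

end SigmaRhoTau

theorem pcStar_eq_closure_sigma_rho_tau_general (n : ℕ)
    (σ ρ τ : ℕ → MulAut (FreeGroup (Fin n)))
    (hσ : ∀ i, i + 1 < n → IsSigma n i (σ i))
    (hρ : ∀ i, i + 1 < n → IsRho n i (ρ i))
    (hτ : ∀ i, i < n → IsTau n i (τ i)) :
    PCStarSet n =
      ↑(Subgroup.closure
          ({g | ∃ i, i + 1 < n ∧ g = σ i} ∪ {g | ∃ i, i + 1 < n ∧ g = ρ i} ∪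
            {g | ∃ i, i < n ∧ g = τ i})) := by
  rw [← coe_pcStar]
  refine congrArg _ (le_antisymm ?_ (closure_sigmaRhoTau_le_pcStar hσ hρ hτ))
  exact pcStar_le (exists_mem_closure_sigmaRhoTau_apply_of_eq hρ hτ)
    fun _ _ hmj => exists_isPartialConj_mem_closure_sigmaRhoTau hσ hρ hmj

/-- For `n ≥ 1`, the set `PC*_n` is a subgroup of `Aut(F_n)`, namely it
coincides with the subgroup generated by `σ_1, …, σ_{n-1}, ρ_1, …, ρ_{n-1}, τ_1, …, τ_n`
(indices `0`-based here). -/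
theorem pcStar_eq_closure_sigma_rho_tau (n : ℕ) (hn : 1 ≤ n)
    (σ ρ τ : ℕ → MulAut (FreeGroup (Fin n)))
    (hσ : ∀ i, i + 1 < n → IsSigma n i (σ i))
    (hρ : ∀ i, i + 1 < n → IsRho n i (ρ i))
    (hτ : ∀ i, i < n → IsTau n i (τ i)) :
    PCStarSet n =
      ↑(Subgroup.closure
          ({g | ∃ i, i + 1 < n ∧ g = σ i} ∪ {g | ∃ i, i + 1 < n ∧ g = ρ i} ∪
            {g | ∃ i, i < n ∧ g = τ i})) :=
  pcStar_eq_closure_sigma_rho_tau_general n σ ρ τ hσ hρ hτ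

end LoopBraidGroups
end

section
/- For every integer n ≥ 1, the set PConj_n of all automorphisms α of the free group F_n for which there exist words w_1, …, w_n ∈ F_n with α(x_i) = w_i⁻¹ x_i w_i for all i (the basis-conjugating automorphisms), is a subgroup of Aut(F_n), and this subgroup equals the subgroup of Aut(F_n) generated by the automorphisms {α_{ij} : 1 ≤ i ≠ j ≤ n}. -/
/-!
Induct on the total length of the conjugating words `w i`. If the reduced word of some `w i`
starts with `x_i^{±1}`, that letter can be dropped; if the reduced word of some `w j` ends in
`x_i^{±1} w_i` with `i ≠ j`, composing with `α_{ji}^{∓1}` replaces `w j` by a shorter word.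
When neither move applies, the words `w_i⁻¹ x_i^{±1} w_i` satisfy Nielsen's cancellation
condition: in a freely reduced product of `k` of them the middle letters survive, so its length is
at least `k`. Since these elements generate `F_n`, each `x_k` is a single one of them, which
forces every `w i = 1`.
-/

namespace LoopBraidGroups

/-- `IsAlpha n i j a` : `a` is the automorphism `α_{ij}` of the free group of rank `n`,
sending `x_i ↦ x_j⁻¹ x_i x_j` and fixing the other generators. -/
def IsAlpha (n i j : ℕ) (a : MulAut (FreeGroup (Fin n))) : Prop :=
  a (xg n i) = (xg n j)⁻¹ * xg n i * xg n j ∧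
    ∀ k, k < n → k ≠ i → a (xg n k) = xg n k

/-- The set `PConj_n` of basis-conjugating automorphisms `α` of the free group of
rank `n`: those with `α(x_i) = w_i⁻¹ x_i w_i` for some words `w_i`. -/
def PConjSet (n : ℕ) : Set (MulAut (FreeGroup (Fin n))) :=
  {α | ∃ w : Fin n → FreeGroup (Fin n),
      ∀ i : Fin n, α (FreeGroup.of i) = (w i)⁻¹ * FreeGroup.of i * w i}

end LoopBraidGroups

theorem List.exists_maximal_common_suffix {β : Type*} (U V : List β) :
    ∃ P Q s, U = P ++ s ∧ V = Q ++ s ∧ (P = [] ∨ Q = [] ∨ P.getLast? ≠ Q.getLast?) := by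
  induction U using List.reverseRecOn generalizing V with
  | nil => exact ⟨[], V, [], rfl, by simp, .inl rfl⟩
  | append_singleton U x ih =>
    rcases V.eq_nil_or_concat' with rfl | ⟨V, y, rfl⟩
    · exact ⟨U ++ [x], [], [], by simp, rfl, .inr (.inl rfl)⟩
    · by_cases hxy : x = y
      · obtain ⟨P, Q, s, rfl, rfl, h⟩ := ih V
        exact ⟨P, Q, s ++ [x], by simp, by simp [hxy], h⟩
      · exact ⟨U ++ [x], V ++ [y], [], by simp, by simp, .inr (.inr (by simpa using hxy))⟩

theorem Fintype.sum_comp_update_lt {ι M : Type*} [Fintype ι] [DecidableEq ι] (f : M → ℕ)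
    {w : ι → M} {i : ι} {v : M} (h : f v < f (w i)) :
    ∑ k, f (Function.update w i v k) < ∑ k, f (w k) := by
  refine Finset.sum_lt_sum (fun k _ => ?_) ⟨i, Finset.mem_univ i, by simpa using h⟩
  rcases eq_or_ne k i with rfl | hki
  · simpa using h.le
  · simp [hki]

namespace FreeGroup

open List

section IsReduced

variable {α : Type*} {L : List (α × Bool)}

theorem IsReduced.invRev (h : IsReduced L) : IsReduced (invRev L) := by
  rw [FreeGroup.IsReduced, FreeGroup.invRev, isChain_reverse, isChain_map]
  refine h.imp fun a b hab hba => ?_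
  simpa using (hab hba.symm).symm

theorem IsReduced.cons {x : α × Bool} (h : IsReduced L) (hx : ∀ y ∈ L.head?, y.1 ≠ x.1) :
    IsReduced (x :: L) :=
  isChain_cons.2 ⟨fun y hy hxy => absurd hxy.symm (hx y hy), h⟩

end IsReduced

section NielsenCancellation

variable {α β : Type*}

/-- Nielsen's cancellation condition: in a product `Y p * Y q` with `R p q`, at most the halves
`t` cancel, so the middle letters of `Y p` and `Y q` survive. -/
structure NielsenCancellation (R : β → β → Prop) (Y : β → List (α × Bool)) (m : β → ℕ) :
    Prop where
  isReduced (p : β) : IsReduced (Y p)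
  length_eq (p : β) : (Y p).length = 2 * m p + 1
  cancel (p q : β) : R p q → ∃ A t B, Y p = A ++ t ∧ Y q = invRev t ++ B ∧
    t.length ≤ m p ∧ t.length ≤ m q ∧ IsReduced (A ++ B)

variable {R : β → β → Prop} {Y : β → List (α × Bool)} {m : β → ℕ}

theorem NielsenCancellation.exists_mk_flatMap (h : NielsenCancellation R Y m) {p : β}
    {ps : List β} (hps : IsChain R (p :: ps)) : ∃ A t Z, Y p = A ++ t ∧ t.length ≤ m p ∧
      FreeGroup.mk ((p :: ps).flatMap Y) = FreeGroup.mk (A ++ Z) ∧ IsReduced (A ++ Z) ∧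
      ps.length < (A ++ Z).length := by
  induction ps generalizing p with
  | nil =>
    exact ⟨Y p, [], [], by simp, by simp, by simp, by simpa using h.isReduced p,
      by simp [h.length_eq]⟩
  | cons q ps ih =>
    rw [isChain_cons_cons] at hps
    obtain ⟨Aq, t', Z, hYq, ht', hmk, hred, hlen⟩ := ih hps.2
    obtain ⟨A, t, B, hYp, hYq', htp, htq, hAB⟩ := h.cancel p q hps.1
    have hlenp := h.length_eq p
    have hlenq := h.length_eq q
    rw [hYp, length_append] at hlenp
    rw [hYq, length_append] at hlenq
    -- `invRev t` is a prefix of `Aq`, as `t.length ≤ m q < Aq.length`.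
    obtain ⟨C, rfl, rfl⟩ : ∃ C, Aq = invRev t ++ C ∧ B = C ++ t' := by
      rcases append_eq_append_iff.1 (hYq.symm.trans hYq') with ⟨C, h1, -⟩ | ⟨C, h1, h2⟩
      · have := congrArg length h1
        simp only [length_append, invRev_length] at this
        omega
      · exact ⟨C, h1, h2⟩
    simp only [length_append, invRev_length] at hlenq hlen
    have hC : C ≠ [] := by
      rintro rfl
      simp only [length_nil] at hlenq
      omega
    refine ⟨A, t, C ++ Z, hYp, htp, ?_, ?_, ?_⟩
    · rw [flatMap_cons, ← mul_mk, hmk, hYp]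
      simp only [← mul_mk, ← inv_mk]
      group
    · rw [← append_assoc]
      exact (hAB.infix ⟨[], t', by simp⟩).append_overlap
        (hred.infix ⟨invRev t, [], by simp⟩) hC
    · simp only [length_append, length_cons] at hlen ⊢
      omega

theorem NielsenCancellation.length_le_norm_mk_flatMap [DecidableEq α]
    (h : NielsenCancellation R Y m) {ps : List β} (hps : IsChain R ps) :
    ps.length ≤ norm (FreeGroup.mk (ps.flatMap Y)) := by
  cases ps with
  | nil => simp
  | cons p ps =>
    obtain ⟨A, -, Z, -, -, hmk, hred, hlen⟩ := h.exists_mk_flatMap hps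
    rw [hmk, norm, toWord_mk, hred.reduce_eq, length_cons]
    exact hlen

end NielsenCancellation

section ConjWord

variable {ι : Type*}

def conjWord (W : ι → List (ι × Bool)) (p : ι × Bool) : List (ι × Bool) :=
  invRev (W p.1) ++ p :: W p.1

theorem mk_conjWord (W : ι → List (ι × Bool)) (p : ι × Bool) :
    mk (conjWord W p) = (mk (W p.1))⁻¹ * mk [p] * mk (W p.1) := by
  simp [conjWord, inv_mk, mul_mk]

variable {W : ι → List (ι × Bool)}

theorem not_cons_suffix_cons (h₂ : ∀ i j u b, i ≠ j → W j ≠ u ++ (i, b) :: W i)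
    {p r : ι × Bool} (hpr : p ≠ r) : ¬ (p :: W p.1) <:+ (r :: W r.1) := by
  rintro hs
  rcases suffix_cons_iff.1 hs with heq | ⟨u, hu⟩
  · exact hpr (cons.inj heq).1
  · by_cases hpr₁ : p.1 = r.1
    · have := congrArg length hu
      simp only [hpr₁, length_append, length_cons] at this
      omega
    · exact h₂ p.1 r.1 u p.2 hpr₁ hu.symm

theorem isReduced_conjWord (hW : ∀ i, IsReduced (W i)) (h₁ : ∀ i b t, W i ≠ (i, b) :: t)
    (p : ι × Bool) : IsReduced (conjWord W p) := by
  have hhead : ∀ y ∈ (W p.1).head?, y.1 ≠ p.1 := by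
    intro y hy hyp
    obtain ⟨t, ht⟩ := head?_eq_some_iff.1 hy
    exact h₁ p.1 y.2 t (by rw [ht, ← hyp])
  have hinv : IsReduced ((p.1, !p.2) :: W p.1) := (hW p.1).cons hhead
  rw [conjWord, ← singleton_append, ← append_assoc]
  refine IsReduced.append_overlap ?_ ((hW p.1).cons hhead) (by simp)
  simpa [FreeGroup.invRev] using hinv.invRev

theorem exists_cancel_conjWord (hW : ∀ i, IsReduced (W i)) (h₁ : ∀ i b t, W i ≠ (i, b) :: t)
    (h₂ : ∀ i j u b, i ≠ j → W j ≠ u ++ (i, b) :: W i) {p q : ι × Bool}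
    (hpq : p.1 = q.1 → p.2 = q.2) :
    ∃ A t B, conjWord W p = A ++ t ∧ conjWord W q = invRev t ++ B ∧
      t.length ≤ (W p.1).length ∧ t.length ≤ (W q.1).length ∧ IsReduced (A ++ B) := by
  have hred := isReduced_conjWord hW h₁
  by_cases hpq' : p = q
  · subst hpq'
    refine ⟨invRev (W p.1) ++ [p], W p.1, p :: W p.1, by simp [conjWord], rfl, le_rfl, le_rfl,
      ?_⟩
    refine ((hred p).infix ⟨[], W p.1, by simp [conjWord]⟩).append_overlap ?_ (by simp)
    exact isReduced_cons_cons.2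
      ⟨fun _ => rfl, (hred p).infix ⟨invRev (W p.1), [], by simp [conjWord]⟩⟩
  · have hpr : p ≠ (q.1, !q.2) := by rintro rfl; simp at hpq
    -- What cancels is the maximal common suffix `s` of `p :: W p.1` and `q⁻¹ :: W q.1`; by `h₂`
    -- it is a proper suffix of both.
    obtain ⟨P, Q, s, hP, hQ, hmax⟩ :=
      exists_maximal_common_suffix (p :: W p.1) ((q.1, !q.2) :: W q.1)
    have hPne : P ≠ [] := by
      rintro rfl
      exact not_cons_suffix_cons h₂ hpr ⟨Q, by rw [hP, hQ, nil_append]⟩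
    have hQne : Q ≠ [] := by
      rintro rfl
      exact not_cons_suffix_cons h₂ hpr.symm ⟨P, by rw [hP, hQ, nil_append]⟩
    obtain ⟨P, x, rfl⟩ := P.eq_nil_or_concat'.resolve_left hPne
    obtain ⟨Q, y, rfl⟩ := Q.eq_nil_or_concat'.resolve_left hQne
    have hxy : x ≠ y := by simpa using hmax
    have hq : conjWord W q = invRev s ++ ((y.1, !y.2) :: (invRev Q ++ W q.1)) := by
      have : conjWord W q = invRev ((q.1, !q.2) :: W q.1) ++ W q.1 := by
        simp [conjWord, invRev]
      rw [this, hQ]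
      simp [invRev]
    have hlenP := congrArg length hP
    have hlenQ := congrArg length hQ
    simp only [length_cons, length_append] at hlenP hlenQ
    refine ⟨invRev (W p.1) ++ (P ++ [x]), s, (y.1, !y.2) :: (invRev Q ++ W q.1),
      by rw [conjWord, hP]; simp, hq, by simp at hlenP; omega, by simp at hlenQ; omega, ?_⟩
    rw [IsReduced, isChain_append]
    refine ⟨(hred p).infix ⟨[], s, by rw [conjWord, hP]; simp⟩,
      (hred q).infix ⟨invRev s, [], by rw [hq, append_nil]⟩, ?_⟩
    rw [← append_assoc, getLast?_append_of_ne_nil _ (by simp), getLast?_singleton, head?_cons]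
    rintro _ ⟨⟩ _ ⟨⟩ hxy₁
    have hx₂ : x.2 ≠ y.2 := fun h => hxy (Prod.ext hxy₁ h)
    simpa [Bool.eq_not] using hx₂

theorem nielsenCancellation_conjWord (hW : ∀ i, IsReduced (W i))
    (h₁ : ∀ i b t, W i ≠ (i, b) :: t) (h₂ : ∀ i j u b, i ≠ j → W j ≠ u ++ (i, b) :: W i) :
    NielsenCancellation (fun p q : ι × Bool => p.1 = q.1 → p.2 = q.2) (conjWord W)
      (fun p => (W p.1).length) where
  isReduced := isReduced_conjWord hW h₁
  length_eq p := by simp [conjWord]; omega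
  cancel _ _ := exists_cancel_conjWord hW h₁ h₂

end ConjWord

theorem mk_singleton_false {ι : Type*} (i : ι) : mk [(i, false)] = (of i)⁻¹ := by
  simp [of, inv_mk, invRev]

section BasisConjugating

variable {ι : Type*}

def ConjugatesBasisBy (α : MulAut (FreeGroup ι)) (w : ι → FreeGroup ι) : Prop :=
  ∀ i, α (of i) = (w i)⁻¹ * of i * w i

def basisConjugating (ι : Type*) : Subgroup (MulAut (FreeGroup ι)) where
  carrier := {α | ∃ w, ConjugatesBasisBy α w}
  one_mem' := ⟨1, fun i => by simp⟩
  mul_mem' := by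
    rintro α β ⟨u, hu⟩ ⟨v, hv⟩
    refine ⟨fun i => u i * α (v i), fun i => ?_⟩
    rw [MulAut.mul_apply, hv i, _root_.map_mul, _root_.map_mul, _root_.map_inv, hu i]
    group
  inv_mem' := by
    rintro α ⟨u, hu⟩
    refine ⟨fun i => α⁻¹ (u i)⁻¹, fun i => α.injective ?_⟩
    rw [MulAut.apply_inv_self, _root_.map_mul, _root_.map_mul, _root_.map_inv,
      MulAut.apply_inv_self, hu i]
    group

variable {α : MulAut (FreeGroup ι)} {w : ι → FreeGroup ι}

theorem ConjugatesBasisBy.apply_mk_singleton (hw : ConjugatesBasisBy α w) (p : ι × Bool) :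
    α (mk [p]) = (w p.1)⁻¹ * mk [p] * w p.1 := by
  obtain ⟨i, _ | _⟩ := p
  · rw [mk_singleton_false, _root_.map_inv, hw i]
    group
  · exact hw i

variable [DecidableEq ι]

theorem conjugatesBasisBy_update {i : ι} {v : FreeGroup ι} (hi : α (of i) = v⁻¹ * of i * v)
    (hk : ∀ k ≠ i, α (of k) = (w k)⁻¹ * of k * w k) :
    ConjugatesBasisBy α (Function.update w i v) := by
  intro k
  rcases eq_or_ne k i with rfl | hki
  · simpa using hi
  · simpa [hki] using hk k hki

theorem ConjugatesBasisBy.update_of_toWord_eq_cons (hw : ConjugatesBasisBy α w) {i : ι}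
    {b : Bool} {t : List (ι × Bool)} (ht : (w i).toWord = (i, b) :: t) :
    ConjugatesBasisBy α (Function.update w i (mk t)) := by
  refine conjugatesBasisBy_update ?_ fun k _ => hw k
  have hwi : w i = mk [(i, b)] * mk t := by rw [mul_mk, singleton_append, ← ht, mk_toWord]
  rw [hw i, hwi]
  cases b
  · rw [mk_singleton_false]
    group
  · change (of i * mk t)⁻¹ * of i * (of i * mk t) = _
    group

theorem ConjugatesBasisBy.mul_of_toWord_eq_append (hw : ConjugatesBasisBy α w)
    {β : MulAut (FreeGroup ι)} {i j : ι} {u : List (ι × Bool)} {b : Bool}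
    (hβj : β (of j) = mk [(i, b)] * of j * (mk [(i, b)])⁻¹) (hβk : ∀ k ≠ j, β (of k) = of k)
    (hu : (w j).toWord = u ++ (i, b) :: (w i).toWord) :
    ConjugatesBasisBy (α * β) (Function.update w j (mk u * w i)) := by
  refine conjugatesBasisBy_update ?_ fun k hk => by rw [MulAut.mul_apply, hβk k hk, hw k]
  have hwj : w j = mk u * mk [(i, b)] * w i := by
    rw [← mk_toWord (x := w j), hu]
    conv_rhs => rw [← mk_toWord (x := w i)]
    simp only [mul_mk, append_assoc, singleton_append]
  rw [MulAut.mul_apply, hβj, _root_.map_mul, _root_.map_mul, _root_.map_inv,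
    hw.apply_mk_singleton, hw j, hwj]
  group

theorem ConjugatesBasisBy.apply_mk (hw : ConjugatesBasisBy α w) (ps : List (ι × Bool)) :
    α (mk ps) = mk (ps.flatMap (conjWord fun i => (w i).toWord)) := by
  induction ps with
  | nil => simp [← one_eq_mk]
  | cons p ps ih =>
    rw [← singleton_append, ← mul_mk, _root_.map_mul, ih, hw.apply_mk_singleton, singleton_append,
      flatMap_cons, ← mul_mk, mk_conjWord]
    simp only [mk_toWord]

theorem ConjugatesBasisBy.eq_one (hw : ConjugatesBasisBy α w)
    (h₁ : ∀ i b t, (w i).toWord ≠ (i, b) :: t)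
    (h₂ : ∀ i j u b, i ≠ j → (w j).toWord ≠ u ++ (i, b) :: (w i).toWord) : α = 1 := by
  set W : ι → List (ι × Bool) := fun i => (w i).toWord
  have hN := nielsenCancellation_conjWord (W := W) (fun _ => isReduced_toWord) h₁ h₂
  suffices hW : ∀ k, W k = [] by
    refine MulEquiv.toMonoidHom_injective (ext_hom _ _ fun k => ?_)
    simp [hw k, toWord_eq_nil_iff.1 (hW k)]
  intro k
  have hg : α (mk (α⁻¹ (of k)).toWord) = of k := by rw [mk_toWord, MulAut.apply_inv_self]
  have hlen := hN.length_le_norm_mk_flatMap (isReduced_toWord (x := α⁻¹ (of k)))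
  rw [← hw.apply_mk, hg, norm_of] at hlen
  obtain ⟨p, hp⟩ : ∃ p, (α⁻¹ (of k)).toWord = [p] := by
    match h : (α⁻¹ (of k)).toWord, hlen with
    | [], _ => rw [h, ← one_eq_mk, _root_.map_one] at hg; exact absurd hg (one_ne_of k)
    | [p], _ => exact ⟨p, rfl⟩
  rw [hp, hw.apply_mk, flatMap_singleton] at hg
  have hYp : conjWord W p = [(k, true)] := by
    rw [← toWord_of, ← hg, toWord_mk, (hN.isReduced p).reduce_eq]
  have hWp : W p.1 = [] := by
    have := hN.length_eq p
    rw [hYp] at this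
    simpa using this
  obtain rfl : p = (k, true) := by simpa [conjWord, hWp] using hYp
  exact hWp

end BasisConjugating

section Generators

variable {ι : Type*} (A : ι → ι → MulAut (FreeGroup ι))
  (hA_self : ∀ i j, i ≠ j → A i j (of i) = (of j)⁻¹ * of i * of j)
  (hA_ne : ∀ i j k, i ≠ j → k ≠ i → A i j (of k) = of k)
include hA_self hA_ne

theorem mem_basisConjugating {i j : ι} (hij : i ≠ j) : A i j ∈ basisConjugating ι := by
  classical
  refine ⟨Pi.mulSingle i (of j), fun k => ?_⟩
  rcases eq_or_ne k i with rfl | hki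
  · simp [hA_self k j hij]
  · simp [Pi.mulSingle_eq_of_ne hki, hA_ne i j k hij hki]

theorem exists_mem_closure_conj_mk_singleton {i j : ι} (hij : i ≠ j) (b : Bool) :
    ∃ β ∈ Subgroup.closure {g | ∃ i j, i ≠ j ∧ g = A i j},
      β (of j) = mk [(i, b)] * of j * (mk [(i, b)])⁻¹ ∧ ∀ k ≠ j, β (of k) = of k := by
  have hmem : A j i ∈ Subgroup.closure {g | ∃ i j, i ≠ j ∧ g = A i j} :=
    Subgroup.subset_closure ⟨j, i, hij.symm, rfl⟩
  cases b
  · refine ⟨A j i, hmem, ?_, fun k hk => hA_ne j i k hij.symm hk⟩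
    rw [mk_singleton_false, hA_self j i hij.symm, inv_inv]
  · refine ⟨(A j i)⁻¹, inv_mem hmem, (A j i).injective ?_, fun k hk => (A j i).injective ?_⟩
    · change _ = A j i (of i * of j * (of i)⁻¹)
      rw [MulAut.apply_inv_self, _root_.map_mul, _root_.map_mul, _root_.map_inv,
        hA_self j i hij.symm, hA_ne j i i hij.symm hij]
      group
    · rw [MulAut.apply_inv_self, hA_ne j i k hij.symm hk]

theorem ConjugatesBasisBy.mem_closure [Finite ι] {α : MulAut (FreeGroup ι)}
    {w : ι → FreeGroup ι} (hw : ConjugatesBasisBy α w) :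
    α ∈ Subgroup.closure {g | ∃ i j, i ≠ j ∧ g = A i j} := by
  classical
  have : Fintype ι := Fintype.ofFinite ι
  induction hN : ∑ k, norm (w k) using Nat.strong_induction_on generalizing α w with
  | _ N ih =>
    subst hN
    by_cases h₁ : ∃ i b t, (w i).toWord = (i, b) :: t
    · obtain ⟨i, b, t, ht⟩ := h₁
      have hlt : norm (mk t) < norm (w i) :=
        calc norm (mk t) ≤ t.length := norm_mk_le
          _ < norm (w i) := by simp [norm, ht]
      exact ih _ (Fintype.sum_comp_update_lt norm hlt) (hw.update_of_toWord_eq_cons ht) rfl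
    by_cases h₂ : ∃ i j u b, i ≠ j ∧ (w j).toWord = u ++ (i, b) :: (w i).toWord
    · obtain ⟨i, j, u, b, hij, hu⟩ := h₂
      obtain ⟨β, hβ, hβj, hβk⟩ := exists_mem_closure_conj_mk_singleton A hA_self hA_ne hij b
      have hlt : norm (mk u * w i) < norm (w j) :=
        calc norm (mk u * w i) ≤ norm (mk u) + norm (w i) := norm_mul_le _ _
          _ ≤ u.length + norm (w i) := Nat.add_le_add_right norm_mk_le _
          _ < norm (w j) := by simp [norm, hu]
      have hαβ := ih _ (Fintype.sum_comp_update_lt norm hlt)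
        (hw.mul_of_toWord_eq_append hβj hβk hu) rfl
      simpa using mul_mem hαβ (inv_mem hβ)
    push Not at h₁ h₂
    rw [hw.eq_one h₁ h₂]
    exact one_mem _

theorem basisConjugating_eq_closure [Finite ι] :
    basisConjugating ι = Subgroup.closure {g | ∃ i j, i ≠ j ∧ g = A i j} := by
  refine le_antisymm (fun α ⟨w, hw⟩ => hw.mem_closure A hA_self hA_ne) ?_
  rw [Subgroup.closure_le]
  rintro _ ⟨i, j, hij, rfl⟩
  exact mem_basisConjugating A hA_self hA_ne hij

end Generators

end FreeGroup

namespace LoopBraidGroups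

open FreeGroup

theorem xg_val {n : ℕ} (i : Fin n) : xg n i = of i := dif_pos i.isLt

theorem pconj_eq_closure_alpha_general (n : ℕ)
    (a : ℕ → ℕ → MulAut (FreeGroup (Fin n)))
    (ha : ∀ i j, i < n → j < n → i ≠ j → IsAlpha n i j (a i j)) :
    PConjSet n =
      ↑(Subgroup.closure {g | ∃ i j, i < n ∧ j < n ∧ i ≠ j ∧ g = a i j}) := by
  have hα (i j : Fin n) (hij : i ≠ j) := ha i j i.isLt j.isLt (Fin.val_ne_of_ne hij)
  have hgens : {g | ∃ i j, i < n ∧ j < n ∧ i ≠ j ∧ g = a i j} =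
      {g | ∃ i j : Fin n, i ≠ j ∧ g = a i j} := by
    ext g
    constructor
    · rintro ⟨i, j, hi, hj, hij, rfl⟩
      exact ⟨⟨i, hi⟩, ⟨j, hj⟩, fun h => hij (Fin.val_eq_of_eq h), rfl⟩
    · rintro ⟨i, j, hij, rfl⟩
      exact ⟨i, j, i.isLt, j.isLt, Fin.val_ne_of_ne hij, rfl⟩
  rw [hgens, ← basisConjugating_eq_closure (fun i j : Fin n => a i j)
    (fun i j hij => by simpa only [xg_val] using (hα i j hij).1)
    (fun i j k hij hki => by
      simpa only [xg_val] using (hα i j hij).2 k k.isLt (Fin.val_ne_of_ne hki))]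
  rfl

/-- For `n ≥ 1`, the set `PConj_n` of basis-conjugating automorphisms
is a subgroup of `Aut(F_n)`, namely it coincides with the subgroup generated by the
automorphisms `α_{ij}`, `1 ≤ i ≠ j ≤ n` (indices `0`-based here). -/
theorem pconj_eq_closure_alpha (n : ℕ) (hn : 1 ≤ n)
    (a : ℕ → ℕ → MulAut (FreeGroup (Fin n)))
    (ha : ∀ i j, i < n → j < n → i ≠ j → IsAlpha n i j (a i j)) :
    PConjSet n =
      ↑(Subgroup.closure {g | ∃ i j, i < n ∧ j < n ∧ i ≠ j ∧ g = a i j}) :=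
  pconj_eq_closure_alpha_general n a ha

end LoopBraidGroups
end
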